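/- arXiv:1011.0941 — 2 statements merged into one kernel-verified Lean document; each statement's English description precedes it below -/
import Mathlib

section
/- Let n, h, k be integers with k ≥ 1, h ≥ 0, n ≡ h (mod 2), and set s = min(k−1, h). Then the total number of k-down steps, summed over all generalized Dyck paths from (0,0) to (n,h), equals C(n, (n+h+2k−2s)/2) − C(n, (n+h)/2 + k + 1). -/
open Finset

attribute [local instance] Classical.propDecidable

/-- The height of the lattice path `p` (where `true` is a northeast step `(1,1)` and
`false` is a southeast step `(1,-1)`) after its first `i` steps. -/
def pathHeight {n : ℕ} (p : Fin n → Bool) (i : ℕ) : ℤ :=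
  ∑ j ∈ Finset.univ.filter (fun j : Fin n => (j : ℕ) < i), (if p j then (1 : ℤ) else -1)

/-- `p` is a generalized Dyck path from `(0,0)` to `(n,h)`: it ends at height `h`
and never goes below the x-axis. -/
def IsGDPath {n : ℕ} (h : ℤ) (p : Fin n → Bool) : Prop :=
  pathHeight p n = h ∧ ∀ i ≤ n, 0 ≤ pathHeight p i

/-- The set of generalized Dyck paths from `(0,0)` to `(n,h)`. -/
noncomputable def gdPaths (n : ℕ) (h : ℤ) : Finset (Fin n → Bool) :=
  Finset.univ.filter (IsGDPath h)

/-- The number of `k`-down steps of `p`, i.e. southeast steps from height `k` to `k-1`. -/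
noncomputable def downSteps {n : ℕ} (k : ℤ) (p : Fin n → Bool) : ℕ :=
  (Finset.univ.filter (fun i : Fin n => p i = false ∧ pathHeight p (i : ℕ) = k)).card

/-- Binomial coefficient on integers, `0` unless `0 ≤ b ≤ a`. -/
def binom (a b : ℤ) : ℤ :=
  if 0 ≤ b ∧ b ≤ a then (a.toNat.choose b.toNat : ℤ) else 0


/-!
Deleting the last step of a path ending at height `h ≥ 0` gives the recurrence
`F(n+1, h) = F(n, h-1) + F(n, h+1) + [h + 1 = k] N(n, h+1)` for the total number `F` of
`k`-down steps, where `N(n, h) = C(n, m) - C(n, m+1)` with `n + h = 2m` is the number of paths.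
By Pascal's rule the closed forms of `N` and `F` satisfy the same recurrences; both vanish at
`h = -1`, which absorbs the boundary at the x-axis, and the claim follows by induction on `n`.
-/

lemma pathHeight_zero {n : ℕ} (p : Fin n → Bool) : pathHeight p 0 = 0 := by
  simp [pathHeight]

lemma pathHeight_succ {n : ℕ} (p : Fin n → Bool) {i : ℕ} (hi : i < n) :
    pathHeight p (i + 1) = pathHeight p i + if p ⟨i, hi⟩ then 1 else -1 := by
  have hfilter : univ.filter (fun j : Fin n => (j : ℕ) < i + 1) =
      insert ⟨i, hi⟩ (univ.filter fun j : Fin n => (j : ℕ) < i) := by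
    ext j
    simp only [mem_filter, mem_univ, true_and, mem_insert, Fin.ext_iff]
    omega
  rw [pathHeight, hfilter, sum_insert (by simp), add_comm]
  rfl

lemma pathHeight_snoc {n : ℕ} (q : Fin n → Bool) (b : Bool) {i : ℕ} (hi : i ≤ n) :
    pathHeight (Fin.snoc q b : Fin (n + 1) → Bool) i = pathHeight q i := by
  induction i with
  | zero => simp only [pathHeight_zero]
  | succ i ih =>
    rw [pathHeight_succ _ (by omega), pathHeight_succ q (by omega), ih (by omega)]
    have hstep : (Fin.snoc q b : Fin (n + 1) → Bool) ⟨i, by omega⟩ = q ⟨i, by omega⟩ :=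
      Fin.snoc_castSucc (α := fun _ => Bool) b q ⟨i, by omega⟩
    rw [hstep]

lemma pathHeight_snoc_last {n : ℕ} (q : Fin n → Bool) (b : Bool) :
    pathHeight (Fin.snoc q b : Fin (n + 1) → Bool) (n + 1) =
      pathHeight q n + if b then 1 else -1 := by
  have hlast : (Fin.snoc q b : Fin (n + 1) → Bool) ⟨n, Nat.lt_succ_self n⟩ = b :=
    Fin.snoc_last (α := fun _ => Bool) ..
  rw [pathHeight_succ _ (Nat.lt_succ_self n), pathHeight_snoc q b le_rfl, hlast]

lemma isGDPath_snoc {n : ℕ} {h : ℤ} (hh : 0 ≤ h) (q : Fin n → Bool) (b : Bool) :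
    IsGDPath h (Fin.snoc q b : Fin (n + 1) → Bool) ↔ IsGDPath (h - if b then 1 else -1) q := by
  simp only [IsGDPath, pathHeight_snoc_last]
  constructor
  · rintro ⟨hend, hnonneg⟩
    refine ⟨by omega, fun i hi => ?_⟩
    rw [← pathHeight_snoc q b hi]
    exact hnonneg i (by omega)
  · rintro ⟨hend, hnonneg⟩
    refine ⟨by omega, fun i hi => ?_⟩
    rcases Nat.lt_or_ge i (n + 1) with hi' | hi'
    · rw [pathHeight_snoc q b (by omega)]
      exact hnonneg i (by omega)
    · rw [show i = n + 1 by omega, pathHeight_snoc_last]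
      omega

lemma isGDPath_zero_iff {h : ℤ} (p : Fin 0 → Bool) : IsGDPath h p ↔ h = 0 := by
  simpa [IsGDPath, pathHeight] using eq_comm

lemma gdPaths_eq_empty {n : ℕ} {h : ℤ} (hh : h < 0) : gdPaths n h = ∅ := by
  ext p
  simp only [gdPaths, mem_filter, mem_univ, true_and, notMem_empty, iff_false]
  exact fun hp => hh.not_ge (hp.1 ▸ hp.2 n le_rfl)

lemma downSteps_snoc {n : ℕ} (k : ℤ) (q : Fin n → Bool) (b : Bool) :
    downSteps k (Fin.snoc q b : Fin (n + 1) → Bool) =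
      downSteps k q + if b = false ∧ pathHeight q n = k then 1 else 0 := by
  simp only [downSteps, card_filter, Fin.sum_univ_castSucc, Fin.snoc_castSucc, Fin.snoc_last,
    Fin.val_castSucc, Fin.val_last, pathHeight_snoc q b le_rfl,
    pathHeight_snoc q b (Fin.is_lt _).le]

lemma sum_gdPaths_succ {M : Type*} [AddCommMonoid M] {n : ℕ} {h : ℤ} (hh : 0 ≤ h)
    (f : (Fin (n + 1) → Bool) → M) :
    ∑ p ∈ gdPaths (n + 1) h, f p =
      ∑ q ∈ gdPaths n (h - 1), f (Fin.snoc q true) +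
        ∑ q ∈ gdPaths n (h + 1), f (Fin.snoc q false) := by
  simp only [gdPaths, sum_filter]
  rw [← (Fin.snocEquiv fun _ => Bool).sum_comp, Fintype.sum_prod_type, Fintype.sum_bool]
  simp only [Fin.snocEquiv, Equiv.coe_fn_mk, isGDPath_snoc hh, if_true, Bool.false_eq_true,
    if_false, sub_neg_eq_add]

lemma card_gdPaths_succ {n : ℕ} {h : ℤ} (hh : 0 ≤ h) :
    #(gdPaths (n + 1) h) = #(gdPaths n (h - 1)) + #(gdPaths n (h + 1)) := by
  simp only [card_eq_sum_ones, sum_gdPaths_succ hh]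

/-- A `k`-down step is created exactly when a path ending at height `k` is extended downwards. -/
lemma sum_downSteps_gdPaths_succ {n : ℕ} {h : ℤ} (hh : 0 ≤ h) (k : ℤ) :
    ∑ p ∈ gdPaths (n + 1) h, downSteps k p =
      ∑ q ∈ gdPaths n (h - 1), downSteps k q + ∑ q ∈ gdPaths n (h + 1), downSteps k q +
        if h + 1 = k then #(gdPaths n (h + 1)) else 0 := by
  have hlast : ∀ q ∈ gdPaths n (h + 1), downSteps k (Fin.snoc q false : Fin (n + 1) → Bool) =
      downSteps k q + if h + 1 = k then 1 else 0 := by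
    intro q hq
    rw [downSteps_snoc, ((mem_filter.mp hq).2).1]
    simp
  rw [sum_gdPaths_succ hh, sum_congr rfl hlast, sum_add_distrib, add_assoc]
  by_cases hk : h + 1 = k <;> simp [downSteps_snoc, hk]

lemma binom_of_neg (a : ℤ) {b : ℤ} (hb : b < 0) : binom a b = 0 :=
  if_neg fun h => by omega

lemma binom_of_lt {a b : ℤ} (hab : a < b) : binom a b = 0 :=
  if_neg fun h => by omega

lemma binom_natCast (n b : ℕ) : binom n b = n.choose b := by
  rw [binom]
  split_ifs with hb
  · simp
  · rw [Nat.choose_eq_zero_of_lt (by omega), Nat.cast_zero]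

lemma binom_succ (n : ℕ) (b : ℤ) : binom (n + 1) b = binom n b + binom n (b - 1) := by
  rcases lt_or_ge b 0 with hb | hb
  · simp only [binom_of_neg _ hb, binom_of_neg _ (show b - 1 < 0 by omega), add_zero]
  lift b to ℕ using hb
  rw [← Nat.cast_succ]
  rcases b with _ | c
  · rw [Nat.cast_zero, zero_sub, binom_of_neg _ neg_one_lt_zero, ← Nat.cast_zero,
      binom_natCast, binom_natCast]
    simp
  · rw [show ((c + 1 : ℕ) : ℤ) - 1 = c by push_cast; ring, binom_natCast, binom_natCast,
      binom_natCast, Nat.choose_succ_succ', Nat.cast_add, add_comm]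

lemma binom_sub_self (n : ℕ) (b : ℤ) : binom n (n - b) = binom n b := by
  rcases lt_or_ge b 0 with hb | hb
  · rw [binom_of_neg _ hb, binom_of_lt (by omega)]
  rcases lt_or_ge (n : ℤ) b with hbn | hbn
  · rw [binom_of_lt hbn, binom_of_neg _ (by omega)]
  lift b to ℕ using hb
  rw [← Nat.cast_sub (by omega), binom_natCast, binom_natCast, Nat.choose_symm (by omega)]

lemma card_gdPaths_zero (h : ℤ) : (#(gdPaths 0 h) : ℤ) = if h = 0 then 1 else 0 := by
  by_cases hh : h = 0 <;> simp [gdPaths, isGDPath_zero_iff, hh]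

-- Admitting `h = -1`, where both sides vanish, makes the step at `h = 0` like all others.
theorem card_gdPaths (n : ℕ) {h m : ℤ} (hh : -1 ≤ h) (hm : n + h = 2 * m) :
    (#(gdPaths n h) : ℤ) = binom n m - binom n (m + 1) := by
  induction n generalizing h m with
  | zero =>
    rw [card_gdPaths_zero, binom_of_lt (by omega : ((0 : ℕ) : ℤ) < m + 1)]
    split_ifs with h0
    · rw [show m = 0 by omega, Nat.cast_zero, ← Nat.cast_zero, binom_natCast]
      simp
    · rw [binom_of_lt (by omega)]
      simp
  | succ n ih =>
    push_cast at hm ⊢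
    rcases hh.eq_or_lt with rfl | hpos
    · rw [gdPaths_eq_empty neg_one_lt_zero, ← Nat.cast_succ,
        ← binom_sub_self _ m, show ((n + 1 : ℕ) : ℤ) - m = m + 1 by push_cast; omega]
      simp
    · rw [card_gdPaths_succ (by omega), Nat.cast_add, ih (h := h - 1) (m := m - 1) (by omega)
        (by omega), ih (h := h + 1) (m := m) (by omega) (by omega), binom_succ, binom_succ,
        sub_add_cancel, add_sub_cancel_right]
      ring

-- The closed form of `sum_downSteps_gdPaths` satisfies the recurrence, after Pascal's rule.
lemma apply_sub_min_recurrence {G : Type*} [AddCommGroup G] (f : ℤ → G) (h k m : ℤ) :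
    f (m - 1 + k - min (k - 1) (h - 1)) + f (m + k - min (k - 1) (h + 1)) +
        (if h + 1 = k then f m - f (m + 1) else 0) =
      f (m + k - min (k - 1) h) + f (m + k - min (k - 1) h - 1) := by
  rcases lt_trichotomy (k - 1) h with hlt | rfl | hgt
  · rw [min_eq_left (by omega), min_eq_left (by omega), min_eq_left hlt.le, if_neg (by omega)]
    ring_nf
    abel
  · rw [min_eq_right (by omega), min_eq_left (by omega), min_self, if_pos (by ring)]
    ring_nf
    abel
  · rw [min_eq_right (by omega), min_eq_right (by omega), min_eq_right hgt.le, if_neg (by omega)]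
    ring_nf
    abel

theorem sum_downSteps_gdPaths (n : ℕ) {h k m : ℤ} (hh : -1 ≤ h) (hk : 0 ≤ k)
    (hm : n + h = 2 * m) :
    ((∑ p ∈ gdPaths n h, downSteps k p : ℕ) : ℤ) =
      binom n (m + k - min (k - 1) h) - binom n (m + k + 1) := by
  induction n generalizing h m with
  | zero =>
    rw [binom_of_lt (by omega), binom_of_lt (by omega)]
    simp [downSteps]
  | succ n ih =>
    push_cast at hm
    rw [Nat.cast_succ]
    rcases hh.eq_or_lt with rfl | hpos
    · rw [gdPaths_eq_empty neg_one_lt_zero, min_eq_right (by omega)]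
      simp
    · rw [sum_downSteps_gdPaths_succ (by omega), Nat.cast_add, Nat.cast_add, Nat.cast_ite,
        ih (h := h - 1) (m := m - 1) (by omega) (by omega),
        ih (h := h + 1) (m := m) (by omega) (by omega),
        card_gdPaths n (h := h + 1) (m := m) (by omega) (by omega), Nat.cast_zero,
        binom_succ, binom_succ, ← apply_sub_min_recurrence (binom n) h k m]
      ring_nf

theorem stmt1_general (n h k : ℕ) (hmod : n % 2 = h % 2) :
    ((∑ p ∈ gdPaths n (h : ℤ), downSteps (k : ℤ) p : ℕ) : ℤ) =
      binom n (((n : ℤ) + h + 2 * k - 2 * min ((k : ℤ) - 1) (h : ℤ)) / 2) -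
        binom n (((n : ℤ) + h) / 2 + k + 1) := by
  obtain ⟨m, hm⟩ : ∃ m : ℤ, (n : ℤ) + h = 2 * m := ⟨(n + h) / 2, by omega⟩
  rw [sum_downSteps_gdPaths n (by omega) (by omega) hm]
  congr 2 <;> omega

/-- The total number of k-down steps over all generalized Dyck paths from (0,0) to (n,h)
equals C(n, (n+h+2k−2s)/2) − C(n, (n+h)/2 + k + 1), where s = min(k−1,h). -/
theorem stmt1 (n h k : ℕ) (hk : 1 ≤ k) (hmod : n % 2 = h % 2) :
    ((∑ p ∈ gdPaths n (h : ℤ), downSteps (k : ℤ) p : ℕ) : ℤ) =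
      binom n (((n : ℤ) + h + 2 * k - 2 * min ((k : ℤ) - 1) (h : ℤ)) / 2) -
        binom n (((n : ℤ) + h) / 2 + k + 1) :=
  stmt1_general n h k hmod
end

section
/- Define polynomials p_k ∈ ℤ[x] for k ≥ −1 by p_{−1} = 0, p_0 = 1, and p_{k+1} = p_k − x²·p_{k−1} for k ≥ 0 (these are the renormalized Chebyshev polynomials of the second kind, p_k(x) = x^k·U_k(1/(2x))). Let 𝒞 denote the formal power series Σ_{m≥0} Catalan(m)·x^{2m} over ℤ[q], and for k ≥ 1 let C_k(x,q) = Σ_{n≥0} P_{k,n}(q)·x^n, a formal power series in x with coefficients in ℤ[q]. Then for every k ≥ 1 the identity (p_k − q·x²·p_{k−1}·𝒞) · C_k(x,q) = p_{k−1} − q·x²·p_{k−2}·𝒞 holds in the ring of formal power series in x over ℤ[q]. (This is the cleared-denominator form of C_k(x,q) = (U_{k−1}(1/(2x)) − qx·U_{k−2}(1/(2x))·C(x²)) / (x·(U_k(1/(2x)) − qx·U_{k−1}(1/(2x))·C(x²))).) -/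
/-!
A nonempty Dyck path factors uniquely at its first return as `U A D B` with `A`, `B` Dyck paths,
and its `(k+1)`-down steps are the `k`-down steps of `A`, the final `D` of the factorization
(only when `k = 0`) and the `(k+1)`-down steps of `B`. A Dyck path has no `0`-down steps, so
`C_0 = 𝒞` and `C_{k+1} = 1 + q^[k=0] x² C_k C_{k+1}`. The series
`D_k = p_k − q x² p_{k−1} 𝒞` obey the Chebyshev recurrence `D_{k+1} = D_k − x² D_{k−1}`, and
with the functional equation an induction on `k` gives `D_k C_k = D_{k−1}`.
-/

open Finset

attribute [local instance] Classical.propDecidable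

/-- $P_{k,n}(q)\in\mathbb{Z}[q]$: the sum over all Dyck paths from (0,0) to (n,0)
of $q^{st_k(p)}$, where $st_k(p)$ is the number of k-down steps of p. -/
noncomputable def P (k n : ℕ) : Polynomial ℤ :=
  ∑ p ∈ gdPaths n 0, (Polynomial.X : Polynomial ℤ) ^ downSteps (k : ℤ) p

/-- The renormalized Chebyshev polynomials of the second kind, indexed so that
`pcheb 0 = p_{-1} = 0`, `pcheb 1 = p_0 = 1`, and `pcheb (k+2) = p_{k+1} = p_k − x²·p_{k−1}`. -/
noncomputable def pcheb : ℕ → Polynomial ℤ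
  | 0 => 0
  | 1 => 1
  | (k + 2) => pcheb (k + 1) - Polynomial.X ^ 2 * pcheb k

/-- Embedding of ℤ[x] into the ring of formal power series in x over ℤ[q]. -/
noncomputable def emb (p : Polynomial ℤ) : PowerSeries (Polynomial ℤ) :=
  ((p.map (Int.castRingHom (Polynomial ℤ)) : Polynomial (Polynomial ℤ)) :
    PowerSeries (Polynomial ℤ))

/-- 𝒞 = Σ_{m≥0} Catalan(m)·x^{2m}, the generating function of Dyck paths by length,
as a formal power series in x over ℤ[q]. -/
noncomputable def catGF : PowerSeries (Polynomial ℤ) :=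
  PowerSeries.mk fun m => if Even m then ((catalan (m / 2) : ℤ) : Polynomial ℤ) else 0

/-- $C_k(x,q) = Σ_{n≥0} P_{k,n}(q)·x^n$, a formal power series in x over ℤ[q]. -/
noncomputable def Ck (k : ℕ) : PowerSeries (Polynomial ℤ) :=
  PowerSeries.mk fun n => P k n

/-- The constant q, viewed inside the ring of formal power series in x over ℤ[q]. -/
noncomputable def qq : PowerSeries (Polynomial ℤ) :=
  PowerSeries.C Polynomial.X

open DyckStep

namespace List

def netRise (l : List DyckStep) : ℤ := l.count U - l.count D

@[simp] lemma netRise_nil : netRise [] = 0 := by simp [netRise]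

@[simp] lemma netRise_cons_U (l : List DyckStep) : netRise (U :: l) = netRise l + 1 := by
  simp [netRise]; ring

@[simp] lemma netRise_cons_D (l : List DyckStep) : netRise (D :: l) = netRise l - 1 := by
  simp [netRise]; ring

@[simp] lemma netRise_append (l₁ l₂ : List DyckStep) :
    netRise (l₁ ++ l₂) = netRise l₁ + netRise l₂ := by
  simp [netRise, count_append]; ring

lemma netRise_nonneg_iff (l : List DyckStep) : 0 ≤ l.netRise ↔ l.count D ≤ l.count U := by
  rw [netRise]; omega

lemma netRise_eq_zero_iff (l : List DyckStep) : l.netRise = 0 ↔ l.count U = l.count D := by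
  rw [netRise]; omega

/-- `downStepsFrom k h l` counts the `D` steps of `l` leaving height `k`, when `l` starts at
height `h`. -/
def downStepsFrom (k : ℤ) : ℤ → List DyckStep → ℕ
  | _, [] => 0
  | h, U :: l => downStepsFrom k (h + 1) l
  | h, D :: l => (if h = k then 1 else 0) + downStepsFrom k (h - 1) l

@[simp] lemma downStepsFrom_nil (k h : ℤ) : downStepsFrom k h [] = 0 := rfl

@[simp] lemma downStepsFrom_cons_U (k h : ℤ) (l : List DyckStep) :
    downStepsFrom k h (U :: l) = downStepsFrom k (h + 1) l := rfl

@[simp] lemma downStepsFrom_cons_D (k h : ℤ) (l : List DyckStep) :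
    downStepsFrom k h (D :: l) = (if h = k then 1 else 0) + downStepsFrom k (h - 1) l := rfl

lemma downStepsFrom_append (k h : ℤ) (l₁ l₂ : List DyckStep) :
    downStepsFrom k h (l₁ ++ l₂) = downStepsFrom k h l₁ + downStepsFrom k (h + netRise l₁) l₂ := by
  induction l₁ generalizing h with
  | nil => simp
  | cons s l ih =>
    cases s <;> simp [ih] <;> ring_nf

lemma downStepsFrom_add_add (k h c : ℤ) (l : List DyckStep) :
    downStepsFrom (k + c) (h + c) l = downStepsFrom k h l := by
  induction l generalizing h with
  | nil => rfl
  | cons s l ih =>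
    cases s
    · simp [← ih, add_right_comm]
    · simp [← ih, add_sub_right_comm]

lemma downStepsFrom_ofFn {n : ℕ} (k h : ℤ) (f : Fin n → DyckStep) :
    downStepsFrom k h (ofFn f) = #{i | f i = D ∧ h + netRise ((ofFn f).take i) = k} := by
  induction n generalizing h with
  | zero => simp
  | succ n ih =>
    rw [card_filter, Fin.sum_univ_succ, ofFn_succ]
    cases f 0
    · simp only [downStepsFrom_cons_U, ih, card_filter]
      simp [add_assoc, add_comm (1 : ℤ)]
    · simp only [downStepsFrom_cons_D, ih, card_filter]
      simp [eq_comm, add_sub_assoc, sub_add_eq_add_sub]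

end List

namespace DyckWord

noncomputable def ofLength (n : ℕ) : Finset DyckWord :=
  ((univ : Finset {w : DyckWord // w.semilength = n / 2}).map (Function.Embedding.subtype _)).filter
    fun w => w.toList.length = n

lemma mem_ofLength {n : ℕ} {w : DyckWord} : w ∈ ofLength n ↔ w.toList.length = n := by
  simp only [ofLength, mem_filter, mem_map, mem_univ, Function.Embedding.coe_subtype, true_and,
    Subtype.exists, exists_prop, exists_eq_right, and_iff_right_iff_imp]
  rw [← two_mul_semilength_eq_length]
  omega

lemma card_ofLength (n : ℕ) : #(ofLength n) = if Even n then catalan (n / 2) else 0 := by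
  have hlen (w : {w : DyckWord // w.semilength = n / 2}) : w.1.toList.length = n ↔ Even n := by
    rw [← two_mul_semilength_eq_length, w.2, Nat.even_iff]
    omega
  rw [ofLength, filter_map, card_map]
  simp only [Function.comp_def, Function.Embedding.coe_subtype, hlen, filter_const]
  split_ifs
  · rw [card_univ, card_dyckWord_semilength_eq_catalan]
  · rfl

lemma toList_nest_add (A B : DyckWord) :
    (A.nest + B).toList = U :: (A.toList ++ D :: B.toList) := by
  change [U] ++ A.toList ++ [D] ++ B.toList = _
  simp

lemma netRise_toList (w : DyckWord) : w.toList.netRise = 0 :=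
  (List.netRise_eq_zero_iff _).2 w.count_U_eq_count_D

lemma downStepsFrom_nest_add (k : ℤ) (A B : DyckWord) :
    (A.nest + B).toList.downStepsFrom (k + 1) 0 =
      A.toList.downStepsFrom k 0 + (if k = 0 then 1 else 0) + B.toList.downStepsFrom (k + 1) 0 := by
  rw [toList_nest_add, List.downStepsFrom_cons_U, List.downStepsFrom_append,
    List.downStepsFrom_cons_D, netRise_toList, ← List.downStepsFrom_add_add k 0 1]
  simp [add_assoc]

lemma downStepsFrom_of_nonpos (w : DyckWord) {k : ℤ} (hk : k ≤ 0) :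
    w.toList.downStepsFrom k 0 = 0 := by
  rw [← ofTree_toTree w]
  induction w.toTree generalizing k with
  | nil => rfl
  | node _ l r ihl ihr =>
    obtain ⟨j, rfl⟩ : ∃ j, k = j + 1 := ⟨k - 1, by ring⟩
    rw [ofTree, downStepsFrom_nest_add, ihl (by omega), ihr hk, if_neg (by omega)]

theorem sum_ofLength_add_two {M : Type*} [AddCommMonoid M] (m : ℕ) (f : DyckWord → M) :
    ∑ w ∈ ofLength (m + 2), f w =
      ∑ ab ∈ antidiagonal m, ∑ A ∈ ofLength ab.1, ∑ B ∈ ofLength ab.2, f (A.nest + B) := by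
  simp_rw [← sum_product', sum_sigma']
  symm
  refine sum_bij' (fun x _ => x.2.1.nest + x.2.2)
    (fun w _ => ⟨(w.insidePart.toList.length, w.outsidePart.toList.length),
      (w.insidePart, w.outsidePart)⟩) (fun x hx => ?_) (fun w hw => ?_)
    (fun x hx => ?_) (fun w hw => ?_) (fun _ _ => rfl)
  · simp only [mem_sigma, mem_product, HasAntidiagonal.mem_antidiagonal, mem_ofLength] at hx ⊢
    simp only [toList_nest_add, List.length_cons, List.length_append]
    omega
  · rw [mem_ofLength] at hw
    have hw0 : w ≠ 0 := by rintro rfl; simp at hw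
    have hlen := congrArg (·.toList.length) (nest_insidePart_add_outsidePart hw0)
    simp only [toList_nest_add, List.length_cons, List.length_append] at hlen
    simp only [mem_sigma, mem_product, HasAntidiagonal.mem_antidiagonal, mem_ofLength, and_true]
    omega
  · obtain ⟨⟨a, b⟩, A, B⟩ := x
    simp only [mem_sigma, mem_product, HasAntidiagonal.mem_antidiagonal, mem_ofLength] at hx
    obtain ⟨-, rfl, rfl⟩ := hx
    simp [insidePart_add, outsidePart_add]
  · have hw0 : w ≠ 0 := by rintro rfl; simp [mem_ofLength] at hw
    exact nest_insidePart_add_outsidePart hw0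

end DyckWord

def DyckStep.ofBool : Bool → DyckStep
  | true => U
  | false => D

@[simp] lemma DyckStep.ofBool_true : DyckStep.ofBool true = U := rfl

@[simp] lemma DyckStep.ofBool_false : DyckStep.ofBool false = D := rfl

def stepsOf {n : ℕ} (p : Fin n → Bool) : List DyckStep :=
  List.ofFn (DyckStep.ofBool ∘ p)

lemma pathHeight_eq_netRise {n : ℕ} (p : Fin n → Bool) (i : ℕ) :
    pathHeight p i = ((stepsOf p).take i).netRise := by
  induction n generalizing i with
  | zero => simp [pathHeight, stepsOf]
  | succ n ih =>
    cases i with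
    | zero => simp [pathHeight]
    | succ i =>
      have ih' := ih (fun j => p j.succ) i
      unfold pathHeight stepsOf at *
      rw [sum_filter] at ih' ⊢
      rw [Fin.sum_univ_succ, List.ofFn_succ, List.take_succ_cons]
      simp only [Function.comp_def] at ih' ⊢
      cases p 0 <;> simp [← ih'] <;> ring

lemma downSteps_eq_downStepsFrom {n : ℕ} (k : ℤ) (p : Fin n → Bool) :
    downSteps k p = (stepsOf p).downStepsFrom k 0 := by
  rw [stepsOf, List.downStepsFrom_ofFn, downSteps]
  congr 1
  apply filter_congr
  intro i _
  cases hp : p i <;> simp [hp, stepsOf, pathHeight_eq_netRise]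

lemma isGDPath_zero_iff_s9 {n : ℕ} (p : Fin n → Bool) :
    IsGDPath 0 p ↔ (stepsOf p).count U = (stepsOf p).count D ∧
      ∀ i, ((stepsOf p).take i).count D ≤ ((stepsOf p).take i).count U := by
  have hlen : (stepsOf p).length = n := List.length_ofFn
  simp only [IsGDPath, pathHeight_eq_netRise, ← List.netRise_nonneg_iff, ← List.netRise_eq_zero_iff]
  rw [List.take_of_length_le hlen.le]
  refine and_congr_right fun _ => ⟨fun h i => ?_, fun h i _ => h i⟩
  rw [List.take_eq_take_min, hlen]
  exact h _ (min_le_right i n)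

def DyckWord.ofGDPath {n : ℕ} (p : Fin n → Bool) (hp : IsGDPath 0 p) : DyckWord :=
  ⟨stepsOf p, ((isGDPath_zero_iff_s9 p).1 hp).1, ((isGDPath_zero_iff_s9 p).1 hp).2⟩

def ofSteps (n : ℕ) (l : List DyckStep) : Fin n → Bool :=
  fun i => decide (l[(i : ℕ)]? = some U)

lemma stepsOf_ofSteps {l : List DyckStep} {n : ℕ} (hl : l.length = n) :
    stepsOf (ofSteps n l) = l := by
  subst hl
  refine List.ext_getElem (by simp [stepsOf]) fun i _ hi => ?_
  rcases DyckStep.dichotomy l[i] with h | h <;>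
    simp [ofSteps, stepsOf, List.getElem?_eq_getElem hi, h]

lemma ofSteps_stepsOf {n : ℕ} (p : Fin n → Bool) : ofSteps n (stepsOf p) = p := by
  funext i
  cases h : p i <;> simp [ofSteps, stepsOf, h]

lemma P_eq_sum_ofLength (k n : ℕ) :
    P k n = ∑ w ∈ DyckWord.ofLength n, Polynomial.X ^ w.toList.downStepsFrom k 0 := by
  refine sum_bij' (fun p hp => DyckWord.ofGDPath p (mem_filter.1 hp).2)
    (fun w _ => ofSteps n w.toList) (fun p _ => ?_) (fun w hw => ?_)
    (fun p _ => ?_) (fun w hw => ?_) (fun p _ => ?_)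
  · exact DyckWord.mem_ofLength.2 List.length_ofFn
  · rw [gdPaths, mem_filter, isGDPath_zero_iff_s9, stepsOf_ofSteps (DyckWord.mem_ofLength.1 hw)]
    exact ⟨mem_univ _, w.count_U_eq_count_D, w.count_D_le_count_U⟩
  · exact ofSteps_stepsOf p
  · exact DyckWord.ext (stepsOf_ofSteps (DyckWord.mem_ofLength.1 hw))
  · rw [downSteps_eq_downStepsFrom]
    rfl

lemma P_zero_right (k : ℕ) : P k 0 = 1 := by
  have h : DyckWord.ofLength 0 = {0} := by
    ext w
    rw [DyckWord.mem_ofLength, mem_singleton, List.length_eq_zero_iff, DyckWord.toList_eq_nil]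
  simp [P_eq_sum_ofLength, h, DyckWord.toList_eq_nil.2 rfl]

lemma P_one_right (k : ℕ) : P k 1 = 0 := by
  have h : DyckWord.ofLength 1 = ∅ := by
    simpa using DyckWord.card_ofLength 1
  simp [P_eq_sum_ofLength, h]

lemma P_succ_add_two (k m : ℕ) :
    P (k + 1) (m + 2) =
      Polynomial.X ^ (if k = 0 then 1 else 0) *
        ∑ ab ∈ antidiagonal m, P k ab.1 * P (k + 1) ab.2 := by
  simp only [P_eq_sum_ofLength, DyckWord.sum_ofLength_add_two, sum_mul_sum]
  simp only [mul_sum]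
  refine sum_congr rfl fun ab _ => sum_congr rfl fun A _ => sum_congr rfl fun B _ => ?_
  rw [Nat.cast_succ, DyckWord.downStepsFrom_nest_add]
  simp only [Nat.cast_eq_zero, pow_add]
  ring

lemma Ck_zero : Ck 0 = catGF := by
  ext n
  simp only [Ck, catGF, PowerSeries.coeff_mk, P_eq_sum_ofLength, Nat.cast_zero,
    DyckWord.downStepsFrom_of_nonpos _ le_rfl, pow_zero, sum_const, DyckWord.card_ofLength]
  split_ifs <;> simp

lemma Ck_succ (k : ℕ) :
    Ck (k + 1) =
      1 + PowerSeries.C (Polynomial.X ^ (if k = 0 then 1 else 0)) * PowerSeries.X ^ 2 *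
        Ck k * Ck (k + 1) := by
  refine PowerSeries.ext fun n => ?_
  rw [mul_right_comm _ (PowerSeries.X ^ 2), mul_right_comm _ (PowerSeries.X ^ 2),
    mul_assoc (PowerSeries.C _), map_add, PowerSeries.coeff_mul_X_pow', PowerSeries.coeff_one]
  rcases n with _ | _ | m
  · simp [Ck, P_zero_right]
  · simp [Ck, P_one_right]
  · rw [if_neg (by omega), if_pos (by omega), zero_add, show m + 1 + 1 - 2 = m from rfl,
      PowerSeries.coeff_C_mul, PowerSeries.coeff_mul]
    simp [Ck, P_succ_add_two]

lemma emb_pcheb_add_two (k : ℕ) :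
    emb (pcheb (k + 2)) = emb (pcheb (k + 1)) - PowerSeries.X ^ 2 * emb (pcheb k) := by
  simp [emb, pcheb]

noncomputable def chebDenom (k : ℕ) : PowerSeries (Polynomial ℤ) :=
  emb (pcheb (k + 1)) - qq * PowerSeries.X ^ 2 * emb (pcheb k) * catGF

lemma chebDenom_add_two (k : ℕ) :
    chebDenom (k + 2) = chebDenom (k + 1) - PowerSeries.X ^ 2 * chebDenom k := by
  simp only [chebDenom, emb_pcheb_add_two]
  ring

lemma chebDenom_succ_mul_Ck (k : ℕ) : chebDenom (k + 1) * Ck (k + 1) = chebDenom k := by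
  induction k with
  | zero =>
    have h := Ck_succ 0
    simp only [↓reduceIte, pow_one, Ck_zero] at h
    simp [chebDenom, pcheb, emb, qq]
    linear_combination h
  | succ k ih =>
    have h := Ck_succ (k + 1)
    simp only [if_neg k.succ_ne_zero, pow_zero, map_one, one_mul] at h
    rw [chebDenom_add_two]
    linear_combination chebDenom (k + 1) * h + PowerSeries.X ^ 2 * Ck (k + 2) * ih

/-- For k ≥ 1, (p_k − q·x²·p_{k−1}·𝒞)·C_k(x,q) = p_{k−1} − q·x²·p_{k−2}·𝒞 holds in the
ring of formal power series in x over ℤ[q] (with p_{-1} = 0, handled by `pcheb`'s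
index shift). -/
theorem stmt9 (k : ℕ) (hk : 1 ≤ k) :
    (emb (pcheb (k + 1)) - qq * PowerSeries.X ^ 2 * emb (pcheb k) * catGF) * Ck k =
      emb (pcheb k) - qq * PowerSeries.X ^ 2 * emb (pcheb (k - 1)) * catGF := by
  obtain ⟨j, rfl⟩ := Nat.exists_eq_add_of_le' hk
  exact chebDenom_succ_mul_Ck j
end
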